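/- The function x̄(t) = cos t is an absolute minimizer of S(x) = ∫_0^{π/2} (x'(t)² - x(t)²) dt over all piecewise C¹ functions x : [0, π/2] → ℝ with x(0) = 1 and x(π/2) = 0; that is, S(x) ≥ S(x̄) for all such x. -/

import Mathlib

/-!
Write `x = cos + u`, so that `u` vanishes at both ends. Since `cos'' + cos = 0`, the cross term
`2 ∫ (cos u + sin u')` is the integral of `(sin u)'` and vanishes, leaving
`S(x) - S(cos) = ∫ (u'² - u²)`. This is nonnegative on any interval of length `< π`: with `c` the
midpoint, `w(t) = tan (c - t)` solves the Riccati equation `w' = -(1 + w²)` on the whole closed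
interval, so `u'² - u² = (u' - w u)² + (w u²)'`, and `w u²` vanishes at both ends. Centring the
Riccati solution at the midpoint, instead of using `tan t`, avoids a limiting argument at `π/2`.
-/

def PiecewiseC1 {E : Type*} [NormedAddCommGroup E] [NormedSpace ℝ E]
    (a b : ℝ) (x dx : ℝ → E) : Prop :=
  ContinuousOn x (Set.Icc a b) ∧
  (∃ M : ℝ, ∀ t ∈ Set.Icc a b, ‖dx t‖ ≤ M) ∧
  ∃ s : Finset ℝ,
    (∀ t ∈ Set.Icc a b \ (s : Set ℝ), HasDerivWithinAt x (dx t) (Set.Icc a b) t) ∧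
    ContinuousOn dx (Set.Icc a b \ (s : Set ℝ))

open Set MeasureTheory Real

theorem hasDerivAt_tan_const_sub {c t : ℝ} (h : cos (c - t) ≠ 0) :
    HasDerivAt (fun t => tan (c - t)) (-(1 + tan (c - t) ^ 2)) t := by
  have := (hasDerivAt_tan h).comp t ((hasDerivAt_id t).const_sub c)
  rwa [one_div, ← inv_one_add_tan_sq h, inv_inv, mul_neg_one] at this

namespace PiecewiseC1

section NormedSpace

variable {E : Type*} [NormedAddCommGroup E] [NormedSpace ℝ E] {a b : ℝ} {x y dx dy : ℝ → E}

theorem of_hasDerivAt (hd : ∀ t ∈ Icc a b, HasDerivAt x (dx t) t)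
    (hc : ContinuousOn dx (Icc a b)) : PiecewiseC1 a b x dx :=
  ⟨fun t ht => (hd t ht).continuousAt.continuousWithinAt,
    isCompact_Icc.exists_bound_of_continuousOn hc,
    ∅, fun t ht => (hd t (by simpa using ht)).hasDerivWithinAt, by simpa using hc⟩

theorem sub (hx : PiecewiseC1 a b x dx) (hy : PiecewiseC1 a b y dy) :
    PiecewiseC1 a b (x - y) (dx - dy) := by
  obtain ⟨hxc, ⟨M, hM⟩, s, hxd, hdxc⟩ := hx
  obtain ⟨hyc, ⟨N, hN⟩, s', hyd, hdyc⟩ := hy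
  refine ⟨hxc.sub hyc,
    ⟨M + N, fun t ht => (norm_sub_le _ _).trans (add_le_add (hM t ht) (hN t ht))⟩,
    s ∪ s', fun t ⟨ht, hts⟩ => ?_, ?_⟩
  · simp only [Finset.coe_union, mem_union, not_or] at hts
    exact (hxd t ⟨ht, hts.1⟩).sub (hyd t ⟨ht, hts.2⟩)
  · rw [Finset.coe_union]
    exact (hdxc.mono (sdiff_subset_sdiff_right subset_union_left)).sub
      (hdyc.mono (sdiff_subset_sdiff_right subset_union_right))

theorem exists_hasDerivAt_off_finset (hx : PiecewiseC1 a b x dx) :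
    ∃ s : Finset ℝ, ∀ t ∈ Ioo a b \ (s : Set ℝ), HasDerivAt x (dx t) t := by
  obtain ⟨-, -, s, hxd, -⟩ := hx
  exact ⟨s, fun t ht =>
    (hxd t ⟨Ioo_subset_Icc_self ht.1, ht.2⟩).hasDerivAt (Icc_mem_nhds ht.1.1 ht.1.2)⟩

variable [ProperSpace E]

theorem intervalIntegrable_comp {F : Type*} [NormedAddCommGroup F] (hx : PiecewiseC1 a b x dx)
    (hab : a ≤ b) {L : E → E → F} (hL : Continuous fun p : E × E => L p.1 p.2) :
    IntervalIntegrable (fun t => L (x t) (dx t)) volume a b := by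
  obtain ⟨hxc, ⟨M, hM⟩, s, -, hdxc⟩ := hx
  obtain ⟨C, hC⟩ := ((isCompact_Icc.image_of_continuousOn hxc).prod
    (isCompact_closedBall (0 : E) M)).exists_bound_of_continuousOn hL.continuousOn
  have hmeas : AEStronglyMeasurable (fun t => L (x t) (dx t)) (volume.restrict (Icc a b)) := by
    rw [← Measure.restrict_congr_set (sdiff_null_ae_eq_self (s.countable_toSet.measure_zero _))]
    exact (hL.comp_continuousOn ((hxc.mono sdiff_subset).prodMk hdxc)).aestronglyMeasurable
      (measurableSet_Icc.diff s.measurableSet)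
  rw [intervalIntegrable_iff_integrableOn_Icc_of_le hab]
  refine IntegrableOn.of_bound measure_Icc_lt_top hmeas C ?_
  filter_upwards [ae_restrict_mem measurableSet_Icc] with t ht
  exact hC (x t, dx t) ⟨mem_image_of_mem x ht, mem_closedBall_zero_iff.2 (hM t ht)⟩

theorem intervalIntegrable_deriv (hx : PiecewiseC1 a b x dx) (hab : a ≤ b) :
    IntervalIntegrable dx volume a b :=
  hx.intervalIntegrable_comp hab (L := fun _ v => v) (by fun_prop)

theorem integral_deriv_eq_sub (hx : PiecewiseC1 a b x dx) (hab : a ≤ b) :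
    ∫ t in a..b, dx t = x b - x a := by
  obtain ⟨s, hs⟩ := hx.exists_hasDerivAt_off_finset
  exact integral_eq_of_hasDerivAt_off_countable_of_le x dx hab s.countable_toSet hx.1 hs
    (hx.intervalIntegrable_deriv hab)

end NormedSpace

theorem mul {𝔸 : Type*} [NormedRing 𝔸] [NormedAlgebra ℝ 𝔸] {a b : ℝ} {f g df dg : ℝ → 𝔸}
    (hf : PiecewiseC1 a b f df) (hg : PiecewiseC1 a b g dg) :
    PiecewiseC1 a b (f * g) (df * g + f * dg) := by
  obtain ⟨hfc, ⟨M, hM⟩, s, hfd, hdfc⟩ := hf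
  obtain ⟨hgc, ⟨N, hN⟩, s', hgd, hdgc⟩ := hg
  obtain ⟨C, hC⟩ := isCompact_Icc.exists_bound_of_continuousOn hfc
  obtain ⟨D, hD⟩ := isCompact_Icc.exists_bound_of_continuousOn hgc
  refine ⟨hfc.mul hgc, ⟨M * D + C * N, fun t ht => ?_⟩,
    s ∪ s', fun t ⟨ht, hts⟩ => ?_, ?_⟩
  · calc ‖df t * g t + f t * dg t‖ ≤ ‖df t‖ * ‖g t‖ + ‖f t‖ * ‖dg t‖ :=
          (norm_add_le _ _).trans (add_le_add (norm_mul_le _ _) (norm_mul_le _ _))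
      _ ≤ M * D + C * N :=
          add_le_add
            (mul_le_mul (hM t ht) (hD t ht) (norm_nonneg _) ((norm_nonneg _).trans (hM t ht)))
            (mul_le_mul (hC t ht) (hN t ht) (norm_nonneg _) ((norm_nonneg _).trans (hC t ht)))
  · simp only [Finset.coe_union, mem_union, not_or] at hts
    exact (hfd t ⟨ht, hts.1⟩).mul (hgd t ⟨ht, hts.2⟩)
  · rw [Finset.coe_union]
    exact ((hdfc.mono (sdiff_subset_sdiff_right subset_union_left)).mul
      (hgc.mono sdiff_subset)).add
      ((hfc.mono sdiff_subset).mul (hdgc.mono (sdiff_subset_sdiff_right subset_union_right)))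

theorem intervalIntegrable_deriv_sq_sub_sq {a b : ℝ} {x dx : ℝ → ℝ}
    (hx : PiecewiseC1 a b x dx) (hab : a ≤ b) :
    IntervalIntegrable (fun t => dx t ^ 2 - x t ^ 2) volume a b :=
  hx.intervalIntegrable_comp hab (L := fun y v => v ^ 2 - y ^ 2) (by fun_prop)

theorem integral_deriv_sq_sub_sq_nonneg {a b : ℝ} {u du : ℝ → ℝ}
    (hu : PiecewiseC1 a b u du) (hab : a ≤ b) (hba : b - a < π) (ha : u a = 0) (hb : u b = 0) :
    0 ≤ ∫ t in a..b, (du t ^ 2 - u t ^ 2) := by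
  set w : ℝ → ℝ := fun t => tan ((a + b) / 2 - t)
  have hw_deriv : ∀ t ∈ Icc a b, HasDerivAt w (-(1 + w t ^ 2)) t := fun t ht =>
    hasDerivAt_tan_const_sub (cos_pos_of_mem_Ioo ⟨by linarith [ht.2], by linarith [ht.1]⟩).ne'
  have hw : PiecewiseC1 a b w (fun t => -(1 + w t ^ 2)) :=
    .of_hasDerivAt hw_deriv fun t ht =>
      (((hw_deriv t ht).continuousAt.pow 2).const_add 1).neg.continuousWithinAt
  have hv := hw.mul (hu.mul hu)
  calc 0 = w b * (u b * u b) - w a * (u a * u a) := by simp [ha, hb]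
    _ = ∫ t in a..b, _ := (hv.integral_deriv_eq_sub hab).symm
    _ ≤ ∫ t in a..b, (du t ^ 2 - u t ^ 2) :=
        intervalIntegral.integral_mono_on hab (hv.intervalIntegrable_deriv hab)
          (hu.intervalIntegrable_deriv_sq_sub_sq hab)
          fun t _ => by
            simp only [Pi.add_apply, Pi.mul_apply]
            nlinarith [sq_nonneg (du t - w t * u t)]

end PiecewiseC1

/-- `x̄(t) = cos t` is an absolute minimizer of `∫_0^{π/2} (ẋ² - x²) dt` over
piecewise C¹ curves with `x(0) = 1`, `x(π/2) = 0`. -/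
theorem stmt10 (x dx : ℝ → ℝ) (hx : PiecewiseC1 0 (Real.pi / 2) x dx)
    (hb0 : x 0 = 1) (hb1 : x (Real.pi / 2) = 0) :
    (∫ t in (0:ℝ)..(Real.pi / 2), ((dx t) ^ 2 - (x t) ^ 2)) ≥
      ∫ t in (0:ℝ)..(Real.pi / 2), ((-Real.sin t) ^ 2 - (Real.cos t) ^ 2) := by
  have hπ : (0:ℝ) ≤ π / 2 := by positivity
  have hcos : PiecewiseC1 0 (π / 2) cos (fun t => -sin t) :=
    .of_hasDerivAt (fun t _ => hasDerivAt_cos t) continuous_sin.neg.continuousOn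
  have hsin : PiecewiseC1 0 (π / 2) sin cos :=
    .of_hasDerivAt (fun t _ => hasDerivAt_sin t) continuous_cos.continuousOn
  set u : ℝ → ℝ := x - cos
  set du : ℝ → ℝ := dx - fun t => -sin t
  have hu : PiecewiseC1 0 (π / 2) u du := hx.sub hcos
  have hp := hsin.mul hu
  have hcross : ∫ t in 0..π / 2, (cos * u + sin * du) t = 0 := by
    rw [hp.integral_deriv_eq_sub hπ]; simp [u, hb0, hb1]
  have hsplit : (∫ t in 0..π / 2, (dx t ^ 2 - x t ^ 2)) -
      ∫ t in 0..π / 2, ((-sin t) ^ 2 - cos t ^ 2) =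
      (∫ t in 0..π / 2, (du t ^ 2 - u t ^ 2)) -
        2 * ∫ t in 0..π / 2, (cos * u + sin * du) t := by
    rw [← intervalIntegral.integral_sub (hx.intervalIntegrable_deriv_sq_sub_sq hπ)
        ((by fun_prop : Continuous fun t => (-sin t) ^ 2 - cos t ^ 2).intervalIntegrable _ _),
      ← intervalIntegral.integral_const_mul, ← intervalIntegral.integral_sub
        (hu.intervalIntegrable_deriv_sq_sub_sq hπ) ((hp.intervalIntegrable_deriv hπ).const_mul 2)]
    congr 1 with t
    simp only [u, du, Pi.add_apply, Pi.mul_apply, Pi.sub_apply]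
    ring
  have hwirtinger := hu.integral_deriv_sq_sub_sq_nonneg hπ (by linarith [pi_pos])
    (by simp [u, hb0]) (by simp [u, hb1])
  rw [ge_iff_le, ← sub_nonneg, hsplit, hcross]
  linarith
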